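/- arXiv:0907.3230 — 5 statements merged into one kernel-verified Lean document; each statement's English description precedes it below -/
import Mathlib

section
/- The coproduct is the least upper bound (supremum) for continuous Weihrauch reducibility: for every countable family (f_i)_{i∈ℕ} of partial functions on Baire space and every partial function h on Baire space, if f_i ≤_W h for every i ∈ ℕ, then ⌈f_i⌉_{i∈ℕ} ≤_W h. -/
abbrev Baire : Type := ℕ → ℕ

/-- Continuous Weihrauch reducibility between partial functions on Baire space,
given as a total function together with its domain. -/
def WLE (f : Baire → Baire) (domf : Set Baire)
    (g : Baire → Baire) (domg : Set Baire) : Prop :=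
  ∃ (G : Baire → Baire) (F : Baire × Baire → Baire),
    ContinuousOn G domf ∧
    Set.MapsTo G domf domg ∧
    ContinuousOn F ((fun x => (x, g (G x))) '' domf) ∧
    ∀ x ∈ domf, f x = F (x, g (G x))

/-- The sequence i·x with (i·x)(0) = i and (i·x)(k+1) = x(k). -/
def consSeq (i : ℕ) (x : Baire) : Baire := fun k =>
  match k with
  | 0 => i
  | (k + 1) => x k

/-- The coproduct ⌈f_i⌉_{i∈ℕ}, as a total function: ⌈f_i⌉(i·x) = i·f_i(x). -/
def copMap (f : ℕ → Baire → Baire) : Baire → Baire :=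
  fun w => consSeq (w 0) (f (w 0) (fun k => w (k + 1)))

/-- Domain of the coproduct: {i·x : i ∈ ℕ, x ∈ dom f_i}. -/
def copDom (D : ℕ → Set Baire) : Set Baire :=
  {w | ∃ i : ℕ, ∃ x, x ∈ D i ∧ w = consSeq i x}

/-- Tail of a sequence. -/
def tl (w : Baire) : Baire := fun k => w (k + 1)

lemma continuous_tl : Continuous tl :=
  continuous_pi fun k => continuous_apply (k + 1)

lemma continuous_consSeq (i : ℕ) : Continuous (consSeq i) :=
  continuous_pi fun k => by
    cases k with
    | zero => exact continuous_const
    | succ k => exact continuous_apply k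

lemma tl_consSeq (i : ℕ) (x : Baire) : tl (consSeq i x) = x := rfl

theorem coproduct_least_upper_bound (f : ℕ → Baire → Baire) (D : ℕ → Set Baire)
    (h : Baire → Baire) (domh : Set Baire)
    (hle : ∀ i : ℕ, WLE (f i) (D i) h domh) :
    WLE (copMap f) (copDom D) h domh := by
  choose G' F' hGc hGm hFc heq using hle
  refine ⟨fun w => G' (w 0) (tl w),
    fun p => consSeq (p.1 0) (F' (p.1 0) (tl p.1, p.2)), ?_, ?_, ?_, ?_⟩
  · -- continuity of G
    rintro w ⟨i, x, hx, rfl⟩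
    have hU : {v : Baire | v 0 = i} ∈ nhds (consSeq i x) :=
      IsOpen.mem_nhds (show IsOpen ((fun v : Baire => v 0) ⁻¹' {i}) from
        IsOpen.preimage (continuous_apply 0) (isOpen_discrete {i})) rfl
    rw [← continuousWithinAt_inter hU]
    have hmaps : Set.MapsTo tl (copDom D ∩ {v : Baire | v 0 = i}) (D i) := by
      rintro v ⟨⟨j, y, hy, rfl⟩, h0⟩
      have : j = i := h0
      subst this
      exact hy
    have hcomp : ContinuousWithinAt (G' i ∘ tl)
        (copDom D ∩ {v : Baire | v 0 = i}) (consSeq i x) :=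
      ContinuousWithinAt.comp (hGc i x hx) continuous_tl.continuousWithinAt hmaps
    refine hcomp.congr ?_ rfl
    rintro v ⟨⟨j, y, hy, rfl⟩, h0⟩
    have : j = i := h0
    subst this
    rfl
  · -- maps to
    rintro w ⟨i, x, hx, rfl⟩
    exact hGm i hx
  · -- continuity of F
    rintro p ⟨w, ⟨i, x, hx, rfl⟩, rfl⟩
    have hU : {q : Baire × Baire | q.1 0 = i} ∈
        nhds (consSeq i x, h (G' (consSeq i x 0) (tl (consSeq i x)))) :=
      IsOpen.mem_nhds (show IsOpen ((fun q : Baire × Baire => q.1 0) ⁻¹' {i}) from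
        IsOpen.preimage ((continuous_apply 0).comp continuous_fst) (isOpen_discrete {i})) rfl
    rw [← continuousWithinAt_inter hU]
    set S := (fun w => (w, h (G' (w 0) (tl w)))) '' copDom D with hS
    have hmaps : Set.MapsTo (fun q : Baire × Baire => (tl q.1, q.2))
        (S ∩ {q : Baire × Baire | q.1 0 = i})
        ((fun x => (x, h (G' i x))) '' D i) := by
      rintro q ⟨⟨v, ⟨j, y, hy, rfl⟩, rfl⟩, h0⟩
      have : j = i := h0
      subst this
      exact ⟨y, hy, rfl⟩
    have hcomp : ContinuousWithinAt
        ((fun q : Baire × Baire => F' i q) ∘ fun q : Baire × Baire => (tl q.1, q.2))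
        (S ∩ {q : Baire × Baire | q.1 0 = i})
        (consSeq i x, h (G' (consSeq i x 0) (tl (consSeq i x)))) := by
      refine ContinuousWithinAt.comp ?_
        (((continuous_tl.comp continuous_fst).prodMk continuous_snd).continuousWithinAt) hmaps
      exact hFc i _ ⟨x, hx, rfl⟩
    have hcomp2 := (continuous_consSeq i).continuousAt.comp_continuousWithinAt hcomp
    refine hcomp2.congr ?_ rfl
    rintro q ⟨⟨v, ⟨j, y, hy, rfl⟩, rfl⟩, h0⟩
    have : j = i := h0
    subst this
    rfl
  · -- the equation
    rintro w ⟨i, x, hx, rfl⟩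
    show consSeq i (f i x) = consSeq i (F' i (x, h (G' i x)))
    rw [heq i x hx]
end

section
/- Distributivity of product over coproduct: for every partial function f on Baire space and every countable family (g_i)_{i∈ℕ} of partial functions on Baire space, ⟨f, ⌈g_i⌉_{i∈ℕ}⟩ ≡_W ⌈⟨f, g_i⟩⌉_{i∈ℕ}. -/
/-- Pairing of two sequences: ⟨x, y⟩(2n) = x(n), ⟨x, y⟩(2n+1) = y(n). -/
def pairSeq (x y : Baire) : Baire := fun n => if n % 2 = 0 then x (n / 2) else y (n / 2)

def evenPart (w : Baire) : Baire := fun n => w (2 * n)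

def oddPart (w : Baire) : Baire := fun n => w (2 * n + 1)

/-- The product ⟨f, g⟩ of partial functions, as a total function. -/
def prodMap (f g : Baire → Baire) : Baire → Baire :=
  fun w => pairSeq (f (evenPart w)) (g (oddPart w))

/-- Domain of the product ⟨f, g⟩. -/
def prodDom (domf domg : Set Baire) : Set Baire :=
  {w | ∃ x ∈ domf, ∃ y ∈ domg, w = pairSeq x y}

-- auxiliary section to insert
lemma evenPart_pairSeq (x y : Baire) : evenPart (pairSeq x y) = x := by
  funext n
  simp only [evenPart, pairSeq, Nat.mul_mod_right, if_pos]
  congr 1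
  omega

lemma oddPart_pairSeq (x y : Baire) : oddPart (pairSeq x y) = y := by
  funext n
  have h : (2 * n + 1) % 2 ≠ 0 := by omega
  simp only [oddPart, pairSeq, if_neg h]
  congr 1
  omega

lemma tail_consSeq (i : ℕ) (x : Baire) : (fun k => consSeq i x (k + 1)) = x := rfl

lemma prodMap_pairSeq (f h : Baire → Baire) (x y : Baire) :
    prodMap f h (pairSeq x y) = pairSeq (f x) (h y) := by
  simp [prodMap, evenPart_pairSeq, oddPart_pairSeq]

lemma copMap_consSeq (g : ℕ → Baire → Baire) (i : ℕ) (y : Baire) :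
    copMap g (consSeq i y) = consSeq i (g i y) := rfl

/-- Reshuffling map: pairSeq x (consSeq i y) ↦ consSeq i (pairSeq x y). -/
def mapA : Baire → Baire :=
  fun w => consSeq (oddPart w 0) (pairSeq (evenPart w) (fun k => oddPart w (k + 1)))

/-- Reshuffling map: consSeq i (pairSeq x y) ↦ pairSeq x (consSeq i y). -/
def mapB : Baire → Baire :=
  fun w => pairSeq (evenPart (fun k => w (k + 1)))
    (consSeq (w 0) (oddPart (fun k => w (k + 1))))

lemma mapA_spec (x y : Baire) (i : ℕ) :
    mapA (pairSeq x (consSeq i y)) = consSeq i (pairSeq x y) := by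
  simp only [mapA, evenPart_pairSeq, oddPart_pairSeq]
  rfl

lemma mapB_spec (x y : Baire) (i : ℕ) :
    mapB (consSeq i (pairSeq x y)) = pairSeq x (consSeq i y) := by
  simp only [mapB, tail_consSeq, evenPart_pairSeq, oddPart_pairSeq]
  rfl

lemma mapA_continuous : Continuous mapA := by
  apply continuous_pi
  intro n
  cases n with
  | zero => exact continuous_apply 1
  | succ n =>
    show Continuous fun w : Baire =>
      pairSeq (evenPart w) (fun k => oddPart w (k + 1)) n
    by_cases h : n % 2 = 0 <;> simp only [pairSeq, h, if_true, if_false] <;>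
      exact continuous_apply _

lemma mapB_continuous : Continuous mapB := by
  apply continuous_pi
  intro n
  show Continuous fun w : Baire =>
    pairSeq (evenPart (fun k => w (k + 1)))
      (consSeq (w 0) (oddPart (fun k => w (k + 1)))) n
  by_cases h : n % 2 = 0
  · simp only [pairSeq, h, if_true]
    exact continuous_apply _
  · simp only [pairSeq, h, if_false]
    cases hm : n / 2 with
    | zero => exact continuous_apply 0
    | succ m => exact continuous_apply _

theorem prod_coproduct_distrib (f : Baire → Baire) (domf : Set Baire)
    (g : ℕ → Baire → Baire) (Dg : ℕ → Set Baire) :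
    WLE (prodMap f (copMap g)) (prodDom domf (copDom Dg))
      (copMap (fun i => prodMap f (g i))) (copDom (fun i => prodDom domf (Dg i))) ∧
    WLE (copMap (fun i => prodMap f (g i))) (copDom (fun i => prodDom domf (Dg i)))
      (prodMap f (copMap g)) (prodDom domf (copDom Dg)) := by
  constructor
  · refine ⟨mapA, fun p => mapB p.2, mapA_continuous.continuousOn, ?_, ?_, ?_⟩
    · rintro w ⟨x, hx, v, ⟨i, y, hy, rfl⟩, rfl⟩
      rw [mapA_spec]
      exact ⟨i, pairSeq x y, ⟨x, hx, y, hy, rfl⟩, rfl⟩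
    · exact (mapB_continuous.comp continuous_snd).continuousOn
    · rintro w ⟨x, hx, v, ⟨i, y, hy, rfl⟩, rfl⟩
      simp only [mapA_spec, copMap_consSeq, prodMap_pairSeq, mapB_spec]
  · refine ⟨mapB, fun p => mapA p.2, mapB_continuous.continuousOn, ?_, ?_, ?_⟩
    · rintro w ⟨i, v, ⟨x, hx, y, hy, rfl⟩, rfl⟩
      rw [mapB_spec]
      exact ⟨x, hx, consSeq i y, ⟨i, y, hy, rfl⟩, rfl⟩
    · exact (mapA_continuous.comp continuous_snd).continuousOn
    · rintro w ⟨i, v, ⟨x, hx, y, hy, rfl⟩, rfl⟩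
      simp only [mapB_spec, prodMap_pairSeq, copMap_consSeq, mapA_spec]
end

section
/- The relation ≤_W^f is transitive: for all partial functions f, g, h on Baire space, if f ≤_W ĝ_{<∞} and g ≤_W ĥ_{<∞}, then f ≤_W ĥ_{<∞}. -/
/-- The n-th component of w with respect to the pairing: w_n(m) = w(π(n, m)). -/
def component (w : Baire) (n : ℕ) : Baire := fun m => w (Nat.pair n m)

/-- The parallelization f̂, as a total function: f̂(w)(π(n, m)) = f(w_n)(m). -/
def parMap (f : Baire → Baire) : Baire → Baire :=
  fun w k => f (component w (Nat.unpair k).1) (Nat.unpair k).2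

/-- Domain of the parallelization f̂. -/
def parDom (D : Set Baire) : Set Baire := {w | ∀ n, component w n ∈ D}

/-- Domain of the finite parallelization f̂_{<∞}: only finitely many components
differ from the constant zero sequence. -/
def finParDom (D : Set Baire) : Set Baire :=
  {w | (∀ n, component w n ∈ D) ∧ {n | component w n ≠ fun _ => 0}.Finite}


open Filter Topology Set

/-!
Transitivity of `≤_W` reduces the claim to: if `g ≤_W ĥ_{<∞}` via `(G₂, F₂)`, then
`ĝ_{<∞} ≤_W ĥ_{<∞}`. Given `w`, one copy of `G₂ 0^ℕ` answers all zero components of `w` at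
once, and each nonzero component `wₙ` gets its own copy of `G₂ wₙ`, filed under the position
`⟨n, j⟩` of its first nonzero entry. Being such a position depends on finitely many entries of
`w`, so the new instance depends continuously on `w`, and it has finitely many nonzero components.

The difficulty is continuity of the backward map at a zero component `wₙ = 0`, which nearby
inputs may make nonzero far out. If `h` is continuous at every component of `G₂ 0^ℕ`, the answers
for such perturbed components converge anyway. Otherwise there are `u_P → s` in `dom h` and an
`m` with `h (u_P) m ≠ h s m` for all `P`, and we add sentinel rows: row `r` holds `s` while no
first nonzero position `c ≥ r` exists, and `u_c` for the first one. Coordinate `m` of the answer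
on the last active sentinel row then detects every component that becomes nonzero.
-/

section Graph

variable {X Y : Type*} [TopologicalSpace X] [TopologicalSpace Y] {D : Set X} {Φ : X → Y}

theorem tendsto_fst_nhdsWithin_graphOn (x : X) :
    Tendsto Prod.fst (𝓝[D.graphOn Φ] (x, Φ x)) (𝓝[D] x) := by
  refine tendsto_nhdsWithin_iff.2 ⟨continuous_fst.continuousWithinAt, ?_⟩
  filter_upwards [self_mem_nhdsWithin] with p hp
  exact (mem_graphOn.1 hp).1

theorem eventually_nhdsWithin_graphOn {x : X} {P : X → Prop} (hP : ∀ᶠ x' in 𝓝[D] x, P x') :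
    ∀ᶠ p in 𝓝[D.graphOn Φ] (x, Φ x), ∃ x', P x' ∧ (x', Φ x') = p := by
  filter_upwards [(tendsto_fst_nhdsWithin_graphOn x).eventually hP, self_mem_nhdsWithin] with p hp
    hpD
  exact ⟨p.1, hp, Prod.ext rfl (mem_graphOn.1 hpD).2⟩

end Graph

namespace Baire

theorem tendsto_nhds_iff {α : Type*} {l : Filter α} {φ : α → Baire} {a : Baire} :
    Tendsto φ l (𝓝 a) ↔ ∀ p, ∀ᶠ x in l, φ x p = a p := by
  simp only [tendsto_pi_nhds, nhds_discrete, tendsto_pure]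

theorem eventually_forall_le_eq (w : Baire) (M : ℕ) : ∀ᶠ v in 𝓝 w, ∀ i ≤ M, v i = w i :=
  (finite_Iic M).eventually_all.2 fun i _ => tendsto_nhds_iff.1 tendsto_id i

theorem continuous_component (n : ℕ) : Continuous fun w : Baire => component w n :=
  continuous_pi fun _ => continuous_apply _

theorem tendsto_component_nhdsWithin {D : Set Baire} {w : Baire} (n : ℕ) :
    Tendsto (fun v => component v n) (𝓝[finParDom D] w) (𝓝[D] (component w n)) :=
  tendsto_nhdsWithin_iff.2 ⟨(continuous_component n).continuousWithinAt,
    eventually_mem_nhdsWithin.mono fun _ hv => hv.1 n⟩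

theorem zero_mem_of_mem_finParDom {D : Set Baire} {w : Baire} (hw : w ∈ finParDom D) :
    (0 : Baire) ∈ D := by
  obtain ⟨n, hn⟩ := hw.2.exists_notMem
  have h0 : component w n = 0 := not_not.1 hn
  exact h0 ▸ hw.1 n

theorem finParDom_eq_empty {D : Set Baire} (hD : (0 : Baire) ∉ D) : finParDom D = ∅ :=
  eq_empty_of_forall_notMem fun _ hw => hD (zero_mem_of_mem_finParDom hw)

def ofComponents (b : ℕ → Baire) : Baire := fun p => b p.unpair.1 p.unpair.2

@[simp]
theorem component_ofComponents (b : ℕ → Baire) (n : ℕ) : component (ofComponents b) n = b n := by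
  ext m
  simp [component, ofComponents]

theorem ext_component {v w : Baire} (h : ∀ n, component v n = component w n) : v = w := by
  ext p
  simpa [component] using congrFun (h p.unpair.1) p.unpair.2

theorem continuous_ofComponents : Continuous ofComponents :=
  continuous_pi fun _ => (continuous_apply _).comp (continuous_apply _)

@[simp]
theorem component_parMap (h : Baire → Baire) (W : Baire) (n : ℕ) :
    component (parMap h W) n = h (component W n) := by
  ext m
  simp [component, parMap]

def reindex (e : ℕ → ℕ) (W : Baire) : Baire := ofComponents fun n => component W (e n)

@[simp]
theorem component_reindex (e : ℕ → ℕ) (W : Baire) (n : ℕ) :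
    component (reindex e W) n = component W (e n) := by
  simp [reindex]

theorem parMap_reindex (h : Baire → Baire) (e : ℕ → ℕ) (W : Baire) :
    parMap h (reindex e W) = reindex e (parMap h W) :=
  ext_component fun n => by simp

theorem continuous_reindex (e : ℕ → ℕ) : Continuous (reindex e) :=
  continuous_ofComponents.comp (continuous_pi fun n => continuous_component (e n))

theorem continuousWithinAt_parMap {h : Baire → Baire} {D : Set Baire} {W : Baire}
    (hh : ∀ n, ContinuousWithinAt h D (component W n)) :
    ContinuousWithinAt (parMap h) (parDom D) W := by
  rw [show parMap h = ofComponents ∘ fun V n => h (component V n) from rfl]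
  exact continuous_ofComponents.continuousAt.comp_continuousWithinAt <|
    continuousWithinAt_pi.2 fun n => ContinuousWithinAt.comp (f := fun V => component V n)
      (hh n) (continuous_component n).continuousWithinAt fun _ hV => hV n

theorem tendsto_apply_of_realizer {X : Type*} {g k G : Baire → Baire}
    {F : Baire × Baire → Baire} {D : Set Baire}
    (hF : ContinuousOn F (D.graphOn fun y => k (G y))) (hFg : ∀ y ∈ D, g y = F (y, k (G y)))
    {l : Filter X} {φ : X → Baire} {y : Baire} (hy : y ∈ D) (hφ : Tendsto φ l (𝓝[D] y))
    (hkG : Tendsto (fun x => k (G (φ x))) l (𝓝 (k (G y)))) :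
    Tendsto (fun x => g (φ x)) l (𝓝 (g y)) := by
  obtain ⟨hφy, hφD⟩ := tendsto_nhdsWithin_iff.1 hφ
  have hgraph : Tendsto (fun x => (φ x, k (G (φ x)))) l
      (𝓝[D.graphOn fun y => k (G y)] (y, k (G y))) :=
    tendsto_nhdsWithin_iff.2 ⟨hφy.prodMk_nhds hkG, hφD.mono fun _ hx => mem_image_of_mem _ hx⟩
  rw [hFg y hy]
  exact ((hF _ (mem_image_of_mem _ hy)).tendsto.comp hgraph).congr'
    (hφD.mono fun _ hx => (hFg _ hx).symm)

theorem exists_seq_of_not_continuousWithinAt {h : Baire → Baire} {D : Set Baire} {y : Baire}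
    (hy : ¬ContinuousWithinAt h D y) :
    ∃ m, ∃ u : ℕ → Baire, (∀ P, u P ∈ D) ∧ (∀ P, ∀ i < P, u P i = y i) ∧
      ∀ P, h (u P) m ≠ h y m := by
  obtain ⟨m, hm⟩ : ∃ m, ∃ᶠ x in 𝓝[D] y, h x m ≠ h y m := by
    simpa [ContinuousWithinAt, tendsto_nhds_iff, Filter.not_eventually] using hy
  have hseq (P : ℕ) : ∃ x, (h x m ≠ h y m ∧ x ∈ D) ∧ ∀ i ≤ P, x i = y i :=
    ((frequently_nhdsWithin_iff.1 hm).and_eventually (eventually_forall_le_eq y P)).exists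
  choose u hu using hseq
  exact ⟨m, u, fun P => (hu P).1.2, fun P i hi => (hu P).2 i hi.le, fun P => (hu P).1.1⟩

noncomputable def firstNonzero (y : Baire) : ℕ := sInf {i | y i ≠ 0}

theorem apply_firstNonzero_ne_zero {y : Baire} (hy : y ≠ 0) : y (firstNonzero y) ≠ 0 := by
  obtain ⟨i, hi⟩ := Function.ne_iff.1 hy
  exact Nat.sInf_mem (s := {i | y i ≠ 0}) ⟨i, hi⟩

theorem le_firstNonzero {y : Baire} {r : ℕ} (hy : y ≠ 0) (hr : ∀ i < r, y i = 0) :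
    r ≤ firstNonzero y :=
  not_lt.1 fun h => apply_firstNonzero_ne_zero hy (hr _ h)

theorem firstNonzero_eq_iff {y : Baire} {j : ℕ} :
    (y ≠ 0 ∧ firstNonzero y = j) ↔ (y j ≠ 0 ∧ ∀ i < j, y i = 0) := by
  constructor
  · rintro ⟨hy, rfl⟩
    exact ⟨apply_firstNonzero_ne_zero hy, fun i hi => not_not.1 (Nat.notMem_of_lt_sInf hi)⟩
  · rintro ⟨hj, hlt⟩
    refine ⟨fun h => hj (congrFun h j), le_antisymm (Nat.sInf_le hj) ?_⟩
    exact le_csInf ⟨j, hj⟩ fun i hi => not_lt.1 fun h => hi (hlt i h)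

def IsFirstNonzero (w : Baire) (c : ℕ) : Prop :=
  w c ≠ 0 ∧ ∀ i < c.unpair.2, w (Nat.pair c.unpair.1 i) = 0

theorem isFirstNonzero_pair_iff {w : Baire} {n j : ℕ} :
    IsFirstNonzero w (Nat.pair n j) ↔ component w n ≠ 0 ∧ firstNonzero (component w n) = j := by
  rw [firstNonzero_eq_iff]
  simp [IsFirstNonzero, component]

theorem isFirstNonzero_firstNonzero {w : Baire} {n : ℕ} (hn : component w n ≠ 0) :
    IsFirstNonzero w (Nat.pair n (firstNonzero (component w n))) :=
  isFirstNonzero_pair_iff.2 ⟨hn, rfl⟩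

theorem isFirstNonzero_congr {v w : Baire} {c : ℕ} (h : ∀ i ≤ c, v i = w i) :
    IsFirstNonzero v c ↔ IsFirstNonzero w c := by
  have hlt : ∀ i < c.unpair.2, Nat.pair c.unpair.1 i ≤ c := fun i hi => by
    simpa using (Nat.pair_lt_pair_right c.unpair.1 hi).le
  unfold IsFirstNonzero
  rw [h c le_rfl]
  exact and_congr_right' <| forall₂_congr fun i hi => by rw [h _ (hlt i hi)]

theorem eventually_isFirstNonzero_iff (w : Baire) (M : ℕ) :
    ∀ᶠ v in 𝓝 w, ∀ c ≤ M, IsFirstNonzero v c ↔ IsFirstNonzero w c :=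
  (eventually_forall_le_eq w M).mono fun _ hv _ hc =>
    isFirstNonzero_congr fun i hi => hv i (hi.trans hc)

theorem finite_setOf_isFirstNonzero {w : Baire} (hw : {n | component w n ≠ 0}.Finite) :
    {c | IsFirstNonzero w c}.Finite := by
  refine (hw.image fun n => Nat.pair n (firstNonzero (component w n))).subset fun c hc => ?_
  have hc' : IsFirstNonzero w (Nat.pair c.unpair.1 c.unpair.2) := by rwa [Nat.pair_unpair]
  rw [isFirstNonzero_pair_iff] at hc'
  exact ⟨c.unpair.1, hc'.1, by simp only [hc'.2, Nat.pair_unpair]⟩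

end Baire

namespace WLE

variable {f k m : Baire → Baire} {D₁ D₂ D₃ : Set Baire}

theorem trans (h₁ : WLE f D₁ k D₂) (h₂ : WLE k D₂ m D₃) : WLE f D₁ m D₃ := by
  obtain ⟨G₁, F₁, hG₁, hG₁D, hF₁, hF₁f⟩ := h₁
  obtain ⟨G₂, F₂, hG₂, hG₂D, hF₂, hF₂k⟩ := h₂
  set A := D₁.graphOn fun x => m (G₂ (G₁ x))
  have hfst : MapsTo Prod.fst A D₁ := fun _ hp => (mem_graphOn.1 hp).1
  have hF₂A : ContinuousOn (fun p : Baire × Baire => F₂ (G₁ p.1, p.2)) A := by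
    refine hF₂.comp ((hG₁.comp continuousOn_fst hfst).prodMk continuousOn_snd) ?_
    rintro _ ⟨x, hx, rfl⟩
    exact mem_image_of_mem _ (hG₁D hx)
  refine ⟨G₂ ∘ G₁, fun p => F₁ (p.1, F₂ (G₁ p.1, p.2)), hG₂.comp hG₁ hG₁D, hG₂D.comp hG₁D,
    hF₁.comp (continuousOn_fst.prodMk hF₂A) ?_, fun x hx => ?_⟩
  · rintro _ ⟨x, hx, rfl⟩
    exact ⟨x, hx, by simp [hF₂k _ (hG₁D hx)]⟩
  · simp [hF₁f x hx, hF₂k _ (hG₁D hx)]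

theorem of_continuousOn_fst (G : Baire → Baire) (F : Baire × Baire → Baire)
    (hG : ContinuousOn G D₁) (hGD : MapsTo G D₁ D₂) (hFf : ∀ x ∈ D₁, f x = F (x, k (G x)))
    (hf : ContinuousOn (fun p : Baire × Baire => f p.1) (D₁.graphOn fun x => k (G x))) :
    WLE f D₁ k D₂ :=
  ⟨G, F, hG, hGD, hf.congr (by rintro _ ⟨x, hx, rfl⟩; exact (hFf x hx).symm), hFf⟩

end WLE

namespace FinPar

open Baire

section Sentinel

variable {s : Baire} {u : ℕ → Baire}

open Classical in
noncomputable def sentinelValue (s : Baire) (u : ℕ → Baire) (L : Set ℕ) (r : ℕ) : Baire :=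
  if (L ∩ Ici r).Nonempty then u (sInf (L ∩ Ici r)) else s

open Classical in
/-- Only the rows `0` and `c + 1` with `c ∈ L` are active: for finite `L` finitely many
sentinels are nonzero, and the last active row lies beyond all of `L`. -/
noncomputable def sentinel (s : Baire) (u : ℕ → Baire) (L : Set ℕ) (r : ℕ) : Baire :=
  if r = 0 ∨ r - 1 ∈ L then sentinelValue s u L r else 0

theorem sentinelValue_apply_inter_Iic (hu : ∀ P, ∀ i < P, u P i = s i) (L : Set ℕ) (r : ℕ)
    {M i : ℕ} (hi : i ≤ M) : sentinelValue s u L r i = sentinelValue s u (L ∩ Iic M) r i := by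
  by_cases hM : (L ∩ Iic M ∩ Ici r).Nonempty
  · have hne : (L ∩ Ici r).Nonempty := hM.mono fun c hc => ⟨hc.1.1, hc.2⟩
    have hmem := Nat.sInf_mem hM
    have hle : sInf (L ∩ Ici r) ≤ sInf (L ∩ Iic M ∩ Ici r) := Nat.sInf_le ⟨hmem.1.1, hmem.2⟩
    have heq : sInf (L ∩ Ici r) = sInf (L ∩ Iic M ∩ Ici r) :=
      le_antisymm hle <| Nat.sInf_le
        ⟨⟨(Nat.sInf_mem hne).1, hle.trans hmem.1.2⟩, (Nat.sInf_mem hne).2⟩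
    rw [sentinelValue, sentinelValue, if_pos hne, if_pos hM, heq]
  · rw [sentinelValue, sentinelValue, if_neg hM]
    split_ifs with hne
    · have hc := Nat.sInf_mem hne
      refine hu _ _ (not_le.1 fun hle => hM ⟨_, ⟨hc.1, hle.trans hi⟩, hc.2⟩)
    · rfl

theorem sentinel_apply_congr (hu : ∀ P, ∀ i < P, u P i = s i) {L L' : Set ℕ} {M r i : ℕ}
    (hL : ∀ c ≤ M, c ∈ L' ↔ c ∈ L) (hr : r ≤ M) (hi : i ≤ M) :
    sentinel s u L' r i = sentinel s u L r i := by
  have hIic : L' ∩ Iic M = L ∩ Iic M := by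
    ext c
    simp only [mem_inter_iff, mem_Iic]
    exact ⟨fun h => ⟨(hL c h.2).1 h.1, h.2⟩, fun h => ⟨(hL c h.2).2 h.1, h.2⟩⟩
  have hact : (r = 0 ∨ r - 1 ∈ L') ↔ (r = 0 ∨ r - 1 ∈ L) := or_congr_right (hL _ (by omega))
  by_cases h : r = 0 ∨ r - 1 ∈ L
  · rw [sentinel, sentinel, if_pos h, if_pos (hact.2 h), sentinelValue_apply_inter_Iic hu L' r hi,
      sentinelValue_apply_inter_Iic hu L r hi, hIic]
  · rw [sentinel, sentinel, if_neg h, if_neg (mt hact.1 h)]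

theorem sentinel_eq_of_forall_lt {L : Set ℕ} {r : ℕ} (hr : r = 0 ∨ r - 1 ∈ L)
    (hL : ∀ c ∈ L, c < r) : sentinel s u L r = s := by
  rw [sentinel, if_pos hr, sentinelValue, if_neg]
  rintro ⟨c, hc, hrc⟩
  exact (hL c hc).not_ge hrc

theorem exists_sentinel_eq_of_le {L : Set ℕ} {r c : ℕ} (hr : r = 0 ∨ r - 1 ∈ L) (hc : c ∈ L)
    (hrc : r ≤ c) : ∃ P, sentinel s u L r = u P :=
  ⟨_, by rw [sentinel, if_pos hr, sentinelValue, if_pos ⟨c, hc, hrc⟩]⟩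

theorem exists_active_gt_of_finite {L : Set ℕ} (hL : L.Finite) :
    ∃ r, (r = 0 ∨ r - 1 ∈ L) ∧ ∀ c ∈ L, c < r := by
  rcases L.eq_empty_or_nonempty with rfl | hne
  · exact ⟨0, Or.inl rfl, by simp⟩
  · exact ⟨sSup L + 1, Or.inr (by simpa using Nat.sSup_mem hne hL.bddAbove),
      fun c hc => Nat.lt_succ_of_le (le_csSup hL.bddAbove hc)⟩

theorem setOf_sentinel_ne_zero_subset (L : Set ℕ) :
    {r | sentinel s u L r ≠ 0} ⊆ insert 0 ((· + 1) '' L) := by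
  intro r hr
  rcases Nat.eq_zero_or_pos r with rfl | hr0
  · exact mem_insert _ _
  · have hact : r = 0 ∨ r - 1 ∈ L := by
      by_contra hact
      exact hr (if_neg hact)
    exact mem_insert_of_mem _ ⟨r - 1, hact.resolve_left hr0.ne', Nat.sub_add_cancel hr0⟩

end Sentinel

section Construction

variable {g h G₂ : Baire → Baire} {F₂ : Baire × Baire → Baire} {domg domh : Set Baire}
  {s w : Baire} {u : ℕ → Baire}

def answerRow (c k : ℕ) : ℕ := Nat.pair 1 (Nat.pair c k)

open Classical in
noncomputable def forwardRow (G₂ : Baire → Baire) (s : Baire) (u : ℕ → Baire) (w : Baire) :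
    ℕ → ℕ → Baire
  | 0, k => component (G₂ 0) k
  | 1, ck =>
    if IsFirstNonzero w ck.unpair.1 then
      component (G₂ (component w ck.unpair.1.unpair.1)) ck.unpair.2
    else 0
  | 2, r => sentinel s u {c | IsFirstNonzero w c} r
  | _ + 3, _ => 0

noncomputable def forward (G₂ : Baire → Baire) (s : Baire) (u : ℕ → Baire) (w : Baire) : Baire :=
  ofComponents fun B => forwardRow G₂ s u w B.unpair.1 B.unpair.2

theorem component_forward (B : ℕ) :
    component (forward G₂ s u w) B = forwardRow G₂ s u w B.unpair.1 B.unpair.2 := by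
  simp [forward]

@[simp]
theorem component_forward_pair (t r : ℕ) :
    component (forward G₂ s u w) (Nat.pair t r) = forwardRow G₂ s u w t r := by
  simp [forward]

theorem reindex_pair_zero_forward : reindex (Nat.pair 0) (forward G₂ s u w) = G₂ 0 :=
  ext_component fun k => by simp [forwardRow]

theorem reindex_answerRow_forward {c : ℕ} (hc : IsFirstNonzero w c) :
    reindex (answerRow c) (forward G₂ s u w) = G₂ (component w c.unpair.1) :=
  ext_component fun k => by simp [answerRow, forwardRow, hc]

open Classical in
noncomputable def backward (F₂ : Baire × Baire → Baire) (p : Baire × Baire) : Baire :=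
  ofComponents fun n =>
    if component p.1 n = 0 then F₂ (0, reindex (Nat.pair 0) p.2)
    else F₂ (component p.1 n, reindex (answerRow (Nat.pair n (firstNonzero (component p.1 n)))) p.2)

theorem parMap_eq_backward (hF₂g : ∀ y ∈ domg, g y = F₂ (y, parMap h (G₂ y)))
    (hw : w ∈ finParDom domg) : parMap g w = backward F₂ (w, parMap h (forward G₂ s u w)) := by
  refine ext_component fun n => ?_
  simp only [component_parMap, backward, component_ofComponents, ← parMap_reindex]
  split_ifs with hn
  · rw [reindex_pair_zero_forward, ← hn, hF₂g _ (hw.1 n)]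
  · rw [reindex_answerRow_forward (isFirstNonzero_firstNonzero hn), Nat.unpair_pair,
      hF₂g _ (hw.1 n)]

theorem forwardRow_mem (hG₂D : MapsTo G₂ domg (finParDom domh)) (hs : s ∈ domh)
    (hu : ∀ P, u P ∈ domh) (hw : w ∈ finParDom domg) :
    ∀ t r, forwardRow G₂ s u w t r ∈ domh := by
  have hz := hG₂D (zero_mem_of_mem_finParDom hw)
  have h0 := zero_mem_of_mem_finParDom hz
  intro t r
  match t with
  | 0 => exact hz.1 r
  | 1 =>
    simp only [forwardRow]
    split_ifs
    exacts [(hG₂D (hw.1 _)).1 _, h0]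
  | 2 =>
    simp only [forwardRow, sentinel, sentinelValue]
    split_ifs
    exacts [hu _, hs, h0]
  | _ + 3 => exact h0

theorem finite_setOf_forwardRow_ne_zero (hG₂D : MapsTo G₂ domg (finParDom domh))
    (hw : w ∈ finParDom domg) : ∀ t, {r | forwardRow G₂ s u w t r ≠ 0}.Finite
  | 0 => (hG₂D (zero_mem_of_mem_finParDom hw)).2
  | 1 => by
    refine ((finite_setOf_isFirstNonzero hw.2).biUnion fun c _ =>
      ((hG₂D (hw.1 c.unpair.1)).2.image (Nat.pair c))).subset
      fun ck (hck : forwardRow G₂ s u w 1 ck ≠ 0) => ?_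
    simp only [forwardRow] at hck
    split_ifs at hck with hc
    · exact mem_biUnion hc ⟨ck.unpair.2, hck, Nat.pair_unpair ck⟩
    · exact absurd rfl hck
  | 2 => (((finite_setOf_isFirstNonzero hw.2).image _).insert 0).subset
    (setOf_sentinel_ne_zero_subset _)
  | _ + 3 => by simp [forwardRow]

theorem forward_mem_finParDom (hG₂D : MapsTo G₂ domg (finParDom domh)) (hs : s ∈ domh)
    (hu : ∀ P, u P ∈ domh) (hw : w ∈ finParDom domg) : forward G₂ s u w ∈ finParDom domh := by
  refine ⟨fun B => by simpa [forward] using forwardRow_mem hG₂D hs hu hw _ _, ?_⟩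
  have hrows : {p : ℕ × ℕ | forwardRow G₂ s u w p.1 p.2 ≠ 0}.Finite := by
    refine ((finite_Iio 3).prod ((finite_Iio 3).biUnion fun t _ =>
      finite_setOf_forwardRow_ne_zero (s := s) (u := u) hG₂D hw t)).subset ?_
    rintro ⟨t, r⟩ hp
    have ht : t < 3 := by
      match t, hp with
      | 0, _ | 1, _ | 2, _ => decide
      | _ + 3, hp => exact absurd rfl hp
    exact ⟨ht, mem_biUnion ht hp⟩
  refine (hrows.preimage Nat.pairEquiv.symm.injective.injOn).subset
    fun B (hB : component (forward G₂ s u w) B ≠ 0) => ?_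
  rwa [component_forward] at hB

theorem tendsto_sentinel (hu : ∀ P, ∀ i < P, u P i = s i) (w : Baire) (r : ℕ) :
    Tendsto (fun v => sentinel s u {c | IsFirstNonzero v c} r) (𝓝 w)
      (𝓝 (sentinel s u {c | IsFirstNonzero w c} r)) :=
  tendsto_nhds_iff.2 fun i => (eventually_isFirstNonzero_iff w (max r i)).mono fun _ hv =>
    sentinel_apply_congr hu hv (le_max_left r i) (le_max_right r i)

theorem tendsto_forwardRow (hG₂ : ContinuousOn G₂ domg) (hu : ∀ P, ∀ i < P, u P i = s i)
    (hw : w ∈ finParDom domg) : ∀ t r, Tendsto (fun v => forwardRow G₂ s u v t r)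
      (𝓝[finParDom domg] w) (𝓝 (forwardRow G₂ s u w t r))
  | 0, _ => tendsto_const_nhds
  | 1, ck => by
    have hlocal := eventually_nhdsWithin_of_eventually_nhds (s := finParDom domg)
      (eventually_isFirstNonzero_iff w ck.unpair.1)
    by_cases hc : IsFirstNonzero w ck.unpair.1
    · have hG := ((continuous_component ck.unpair.2).tendsto _).comp
        ((hG₂ _ (hw.1 ck.unpair.1.unpair.1)).tendsto.comp (tendsto_component_nhdsWithin _))
      simp only [forwardRow, if_pos hc]
      refine hG.congr' (hlocal.mono fun v hv => ?_)
      simp [(hv _ le_rfl).2 hc]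
    · refine tendsto_const_nhds.congr' (hlocal.mono fun v hv => ?_)
      simp [forwardRow, hc, mt (hv _ le_rfl).1 hc]
  | 2, r => (tendsto_sentinel hu w r).mono_left nhdsWithin_le_nhds
  | _ + 3, _ => tendsto_const_nhds

theorem continuousOn_forward (hG₂ : ContinuousOn G₂ domg) (hu : ∀ P, ∀ i < P, u P i = s i) :
    ContinuousOn (forward G₂ s u) (finParDom domg) := fun _ hw =>
  (continuous_ofComponents.tendsto _).comp
    (tendsto_pi_nhds.2 fun _ => tendsto_forwardRow hG₂ hu hw _ _)

end Construction

section ReadBack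

variable {g h G₂ : Baire → Baire} {F₂ : Baire × Baire → Baire} {domg domh : Set Baire}
  {s w : Baire} {u : ℕ → Baire} {n : ℕ}

theorem tendsto_parMap_comp_of_ne_zero {D : Set Baire} (hn : component w n ≠ 0) :
    Tendsto (fun p : Baire × Baire => parMap h (G₂ (component p.1 n)))
      (𝓝[D.graphOn fun v => parMap h (forward G₂ s u v)] (w, parMap h (forward G₂ s u w)))
      (𝓝 (parMap h (G₂ (component w n)))) := by
  set c := Nat.pair n (firstNonzero (component w n))
  have hc : IsFirstNonzero w c := isFirstNonzero_firstNonzero hn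
  have hread (v : Baire) (hv : IsFirstNonzero v c) :
      parMap h (G₂ (component v n)) = reindex (answerRow c) (parMap h (forward G₂ s u v)) := by
    rw [← parMap_reindex, reindex_answerRow_forward hv, Nat.unpair_pair]
  rw [hread w hc]
  refine Tendsto.congr' ?_ ((continuous_reindex _).comp continuous_snd).continuousWithinAt
  filter_upwards [eventually_nhdsWithin_graphOn (Φ := fun v => parMap h (forward G₂ s u v))
    (eventually_nhdsWithin_of_eventually_nhds (eventually_isFirstNonzero_iff w c))]
  rintro _ ⟨v, hv, rfl⟩
  exact (hread v ((hv c le_rfl).2 hc)).symm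

theorem eventually_component_eq_zero {m : ℕ} (hw : w ∈ finParDom domg) (hn : component w n = 0)
    (hm : ∀ P, h (u P) m ≠ h s m) :
    ∀ᶠ p in 𝓝[(finParDom domg).graphOn fun v => parMap h (forward G₂ s u v)]
      (w, parMap h (forward G₂ s u w)), component p.1 n = 0 := by
  -- Sentinel `r` shows `s` for `w`; for `v` near `w` with `vₙ ≠ 0`, the first nonzero position
  -- of `vₙ` lies beyond `r`, so the sentinel fires and coordinate `m` of its answer changes.
  obtain ⟨r, hr, hlt⟩ := exists_active_gt_of_finite (finite_setOf_isFirstNonzero hw.2)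
  set q := Nat.pair (Nat.pair 2 r) m
  have hq : parMap h (forward G₂ s u w) q = h s m := by
    simp [q, parMap, forwardRow, sentinel_eq_of_forall_lt hr hlt]
  filter_upwards [eventually_nhdsWithin_graphOn (Φ := fun v => parMap h (forward G₂ s u v))
    (eventually_nhdsWithin_of_eventually_nhds (eventually_forall_le_eq w (Nat.pair n r))),
    nhdsWithin_le_nhds (tendsto_nhds_iff.1 continuous_snd.continuousAt q)]
  rintro _ ⟨v, hv, rfl⟩ hvq
  by_contra hvn
  have hlow (i : ℕ) (hi : i < r) : component v n i = 0 :=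
    (hv _ (Nat.pair_lt_pair_right n hi).le).trans (congrFun hn i)
  have hr' : r = 0 ∨ r - 1 ∈ {c | IsFirstNonzero v c} :=
    hr.imp_right fun h => (isFirstNonzero_congr fun i hi =>
      hv i (hi.trans ((Nat.sub_le r 1).trans (Nat.right_le_pair n r)))).2 h
  obtain ⟨P, hP⟩ := exists_sentinel_eq_of_le (s := s) (u := u) hr'
    (isFirstNonzero_firstNonzero hvn) ((le_firstNonzero hvn hlow).trans (Nat.right_le_pair _ _))
  refine hm P ?_
  rw [← hq, ← hvq]
  simp [q, parMap, forwardRow, hP]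

theorem tendsto_parMap_comp_of_continuousWithinAt (hG₂ : ContinuousOn G₂ domg)
    (hG₂D : MapsTo G₂ domg (finParDom domh)) (h0 : (0 : Baire) ∈ domg)
    (hh : ∀ k, ContinuousWithinAt h domh (component (G₂ 0) k)) (hn : component w n = 0) :
    Tendsto (fun v => parMap h (G₂ (component v n))) (𝓝[finParDom domg] w)
      (𝓝 (parMap h (G₂ 0))) := by
  have hG : Tendsto (fun v => G₂ (component v n)) (𝓝[finParDom domg] w)
      (𝓝[parDom domh] (G₂ 0)) := by
    refine tendsto_nhdsWithin_iff.2
      ⟨(hG₂ 0 h0).tendsto.comp (hn ▸ tendsto_component_nhdsWithin n), ?_⟩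
    filter_upwards [self_mem_nhdsWithin] with v hv
    exact (hG₂D (hv.1 n)).1
  exact (continuousWithinAt_parMap hh).tendsto.comp hG

theorem continuousOn_parMap_comp_fst (hG₂ : ContinuousOn G₂ domg)
    (hG₂D : MapsTo G₂ domg (finParDom domh))
    (hF₂ : ContinuousOn F₂ (domg.graphOn fun y => parMap h (G₂ y)))
    (hF₂g : ∀ y ∈ domg, g y = F₂ (y, parMap h (G₂ y))) (h0 : (0 : Baire) ∈ domg)
    (hsentinel : (∀ k, ContinuousWithinAt h domh (component (G₂ 0) k)) ∨
      ∃ m, ∀ P, h (u P) m ≠ h s m) :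
    ContinuousOn (fun p : Baire × Baire => parMap g p.1)
      ((finParDom domg).graphOn fun v => parMap h (forward G₂ s u v)) := by
  rintro _ ⟨w, hw, rfl⟩
  have hfst := tendsto_fst_nhdsWithin_graphOn (D := finParDom domg)
    (Φ := fun v => parMap h (forward G₂ s u v)) w
  show Tendsto (fun p : Baire × Baire => ofComponents fun n => g (component p.1 n)) _
    (𝓝 (ofComponents fun n => g (component w n)))
  refine (continuous_ofComponents.tendsto _).comp (tendsto_pi_nhds.2 fun n => ?_)
  refine tendsto_apply_of_realizer hF₂ hF₂g (hw.1 n) ((tendsto_component_nhdsWithin n).comp hfst) ?_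
  by_cases hn : component w n = 0
  · rcases hsentinel with hh | ⟨m, hm⟩
    · rw [hn]
      exact (tendsto_parMap_comp_of_continuousWithinAt hG₂ hG₂D h0 hh hn).comp hfst
    · refine tendsto_const_nhds.congr' ((eventually_component_eq_zero hw hn hm).mono fun p hp => ?_)
      simp only [hp, hn]
  · exact tendsto_parMap_comp_of_ne_zero hn

end ReadBack

theorem exists_sentinel_sequence (h : Baire → Baire) {D : Set Baire} {z : Baire}
    (hz : z ∈ finParDom D) :
    ∃ (s : Baire) (u : ℕ → Baire), s ∈ D ∧ (∀ P, u P ∈ D) ∧ (∀ P, ∀ i < P, u P i = s i) ∧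
      ((∀ k, ContinuousWithinAt h D (component z k)) ∨ ∃ m, ∀ P, h (u P) m ≠ h s m) := by
  by_cases hcont : ∀ k, ContinuousWithinAt h D (component z k)
  · have h0 := zero_mem_of_mem_finParDom hz
    exact ⟨0, 0, h0, fun _ => h0, fun _ _ _ => rfl, Or.inl hcont⟩
  · obtain ⟨k, hk⟩ := not_forall.1 hcont
    obtain ⟨m, u, hu, hclose, hm⟩ := exists_seq_of_not_continuousWithinAt hk
    exact ⟨_, u, hz.1 k, hu, hclose, Or.inr ⟨m, hm⟩⟩

end FinPar

theorem WLE.parMap_finParDom {g h : Baire → Baire} {domg domh : Set Baire}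
    (hgh : WLE g domg (parMap h) (finParDom domh)) :
    WLE (parMap g) (finParDom domg) (parMap h) (finParDom domh) := by
  obtain ⟨G₂, F₂, hG₂, hG₂D, hF₂, hF₂g⟩ := hgh
  by_cases h0 : (0 : Baire) ∈ domg
  · obtain ⟨s, u, hs, hu, hclose, hsentinel⟩ := FinPar.exists_sentinel_sequence h (hG₂D h0)
    exact .of_continuousOn_fst (FinPar.forward G₂ s u) (FinPar.backward F₂)
      (FinPar.continuousOn_forward hG₂ hclose) (fun _ => FinPar.forward_mem_finParDom hG₂D hs hu)
      (fun _ => FinPar.parMap_eq_backward hF₂g)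
      (FinPar.continuousOn_parMap_comp_fst hG₂ hG₂D hF₂ hF₂g h0 hsentinel)
  · rw [Baire.finParDom_eq_empty h0]
    exact ⟨id, Prod.snd, continuousOn_empty _, mapsTo_empty _ _, by simp, by simp⟩

theorem f_trans (f g h : Baire → Baire) (domf domg domh : Set Baire)
    (hfg : WLE f domf (parMap g) (finParDom domg))
    (hgh : WLE g domg (parMap h) (finParDom domh)) :
    WLE f domf (parMap h) (finParDom domh) :=
  hfg.trans hgh.parMap_finParDom
end

section
/- MAX is Weihrauch reducible to the finite parallelization of LPO: MAX ≤_W \widehat{LPO}_{<∞}. -/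
open Classical in
/-- LPO(0^ℕ) = 0^ℕ and LPO(w) = 1,0,0,… for w ≠ 0^ℕ. -/
noncomputable def LPO : Baire → Baire := fun w =>
  if w = (fun _ => 0) then (fun _ => 0) else (fun k => if k = 0 then 1 else 0)

/-- MAX(w) = m,0,0,… where m = max{w(i) : i ∈ ℕ}, for bounded w. -/
noncomputable def MAXfun : Baire → Baire :=
  fun w k => if k = 0 then sSup (Set.range w) else 0

/-- Domain of MAX: the bounded sequences. -/
def MAXdom : Set Baire := {w | ∃ b : ℕ, ∀ i, w i ≤ b}

/-- The inner reduction: component n of `Gmax w` records whether `w m > n`. -/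
def Gmax (w : Baire) : Baire := fun k =>
  if (Nat.unpair k).1 < w (Nat.unpair k).2 then 1 else 0

/-- The outer reduction: least n whose LPO-answer is 0. -/
noncomputable def Fmax (p : Baire × Baire) : Baire := fun k =>
  if k = 0 then sInf {n | p.2 (Nat.pair n 0) = 0} else 0

lemma component_Gmax (x : Baire) (n m : ℕ) :
    component (Gmax x) n m = if n < x m then 1 else 0 := by
  simp [component, Gmax, Nat.unpair_pair]

open Classical in
lemma key (x : Baire) (n : ℕ) :
    parMap LPO (Gmax x) (Nat.pair n 0) = if ∀ m, x m ≤ n then 0 else 1 := by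
  simp only [parMap, Nat.unpair_pair]
  by_cases h : ∀ m, x m ≤ n
  · have hz : component (Gmax x) n = fun _ => 0 :=
      funext fun m => by simp [component_Gmax, Nat.not_lt.2 (h m)]
    simp [LPO, hz, h]
  · have hz : component (Gmax x) n ≠ fun _ => 0 := by
      push_neg at h
      obtain ⟨m, hm⟩ := h
      intro he
      have := congrFun he m
      simp [component_Gmax, hm] at this
    simp [LPO, hz, h]

open Classical Topology in
theorem max_le_finPar_lpo :
    WLE MAXfun MAXdom (parMap LPO) (finParDom Set.univ) := by
  refine ⟨Gmax, Fmax, ?_, ?_, ?_, ?_⟩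
  · -- continuity of Gmax
    refine (continuous_pi fun k => ?_).continuousOn
    exact Continuous.comp
      (continuous_of_discreteTopology
        (f := fun v : ℕ => if (Nat.unpair k).1 < v then (1 : ℕ) else 0))
      (continuous_apply (Nat.unpair k).2)
  · -- maps into finParDom
    rintro x ⟨b, hb⟩
    refine ⟨fun n => trivial, (Set.finite_Iio b).subset ?_⟩
    intro n hn
    rw [Set.mem_setOf_eq, Function.ne_iff] at hn
    obtain ⟨m, hm⟩ := hn
    rw [component_Gmax] at hm
    simp only [Set.mem_Iio]
    have hxm : n < x m := by by_contra h'; simp [h'] at hm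
    exact hxm.trans_le (hb m)
  · -- continuity of Fmax on the image
    rintro p ⟨x, hx, rfl⟩
    refine ContinuousAt.continuousWithinAt ?_
    rw [continuousAt_pi]
    intro k
    rcases eq_or_ne k 0 with rfl | hk
    · -- the interesting coordinate
      obtain ⟨b, hb⟩ := hx
      have hbdd : BddAbove (Set.range x) := ⟨b, by rintro _ ⟨m, rfl⟩; exact hb m⟩
      set M := sSup (Set.range x) with hM
      have hMmem : M ∈ Set.range x := Nat.sSup_mem ⟨x 0, 0, rfl⟩ hbdd
      have hMub : ∀ m, x m ≤ M := fun m => le_csSup hbdd ⟨m, rfl⟩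
      -- eventually, the answers below M+1 agree with those at our point
      have hev : ∀ᶠ q : Baire × Baire in 𝓝 (x, parMap LPO (Gmax x)),
          ∀ n ∈ Finset.range (M + 1), q.2 (Nat.pair n 0) = parMap LPO (Gmax x) (Nat.pair n 0) := by
        rw [Filter.eventually_all_finset]
        intro n _
        have hc : Continuous (fun q : Baire × Baire => q.2 (Nat.pair n 0)) :=
          (continuous_apply (Nat.pair n 0)).comp continuous_snd
        have hmem : (fun q : Baire × Baire => q.2 (Nat.pair n 0)) ⁻¹'
            {parMap LPO (Gmax x) (Nat.pair n 0)} ∈ 𝓝 (x, parMap LPO (Gmax x)) :=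
          hc.continuousAt.preimage_mem_nhds
            (IsOpen.mem_nhds (isOpen_discrete _) rfl)
        filter_upwards [hmem] with q hq using hq
      -- on that neighbourhood, Fmax's 0-th coordinate is constantly M
      have hconst : ∀ᶠ q : Baire × Baire in 𝓝 (x, parMap LPO (Gmax x)),
          Fmax q 0 = M := by
        filter_upwards [hev] with q hq
        have hmemM : M ∈ {n | q.2 (Nat.pair n 0) = 0} := by
          rw [Set.mem_setOf_eq, hq M (Finset.mem_range.2 (Nat.lt_succ_self M)), key]
          simp [hMub]
        have hlow : ∀ n, q.2 (Nat.pair n 0) = 0 → M ≤ n := by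
          intro n hn
          by_contra hnM
          push_neg at hnM
          rw [hq n (Finset.mem_range.2 (hnM.trans (Nat.lt_succ_self M))), key] at hn
          have : ¬ ∀ m, x m ≤ n := by
            obtain ⟨m, hmx⟩ := hMmem
            intro hall
            exact absurd (hall m) (by omega)
          simp [this] at hn
        simp only [Fmax, if_pos rfl]
        exact le_antisymm (Nat.sInf_le hmemM) (le_csInf ⟨M, hmemM⟩ hlow)
      have : ContinuousAt (fun _ : Baire × Baire => M) (x, parMap LPO (Gmax x)) :=
        continuousAt_const
      exact this.congr (by filter_upwards [hconst] with q hq using hq.symm)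
    · have : (fun q : Baire × Baire => Fmax q k) = fun _ => 0 := by
        funext q; simp [Fmax, hk]
      rw [this]; exact continuousAt_const
  · -- correctness
    intro x hx
    obtain ⟨b, hb⟩ := hx
    have hbdd : BddAbove (Set.range x) := ⟨b, by rintro _ ⟨m, rfl⟩; exact hb m⟩
    set M := sSup (Set.range x) with hM
    have hMmem : M ∈ Set.range x := Nat.sSup_mem ⟨x 0, 0, rfl⟩ hbdd
    have hMub : ∀ m, x m ≤ M := fun m => le_csSup hbdd ⟨m, rfl⟩
    funext k
    rcases eq_or_ne k 0 with rfl | hk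
    · have hmemM : M ∈ {n | parMap LPO (Gmax x) (Nat.pair n 0) = 0} := by
        rw [Set.mem_setOf_eq, key]; simp [hMub]
      have hlow : ∀ n ∈ {n | parMap LPO (Gmax x) (Nat.pair n 0) = 0}, M ≤ n := by
        intro n hn
        rw [Set.mem_setOf_eq, key] at hn
        by_contra hnM
        push_neg at hnM
        have : ¬ ∀ m, x m ≤ n := by
          obtain ⟨m, hmx⟩ := hMmem
          intro hall
          exact absurd (hall m) (by omega)
        simp [this] at hn
      simp only [MAXfun, Fmax, if_pos rfl]
      exact (le_antisymm (Nat.sInf_le hmemM) (le_csInf ⟨M, hmemM⟩ hlow)).symm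
    · simp [MAXfun, Fmax, hk]
end

section
/- The finite parallelization of LPO is Weihrauch reducible to MAX: \widehat{LPO}_{<∞} ≤_W MAX. (Hence any finite number of oracle calls to LPO can be simulated by a single oracle call to MAX, and \widehat{LPO}_{<∞} ≡_W MAX.) -/
/-- Auxiliary: indices `n < t` witnessed nonzero within the first `t` values. -/
def Sfin (t : ℕ) (x : Baire) : Finset ℕ :=
  (Finset.range t).filter (fun n => ∃ m ∈ Finset.range t, x (Nat.pair n m) ≠ 0)

lemma Sfin_mono {t t' : ℕ} (h : t ≤ t') (x : Baire) : Sfin t x ⊆ Sfin t' x := by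
  intro n hn
  simp only [Sfin, Finset.mem_filter, Finset.mem_range] at *
  obtain ⟨hn1, m, hm, hne⟩ := hn
  exact ⟨hn1.trans_le h, m, hm.trans_le h, hne⟩

lemma component_ne_of_mem_Sfin {t : ℕ} {x : Baire} {n : ℕ} (hn : n ∈ Sfin t x) :
    component x n ≠ (fun _ => 0) := by
  simp only [Sfin, Finset.mem_filter, Finset.mem_range] at hn
  obtain ⟨-, m, -, hne⟩ := hn
  intro hc
  exact hne (congrFun hc m)

/-- Relevant finite coordinate set for `Sfin t`. -/
def Tset (t : ℕ) : Finset ℕ :=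
  (Finset.range t ×ˢ Finset.range t).image (fun p => Nat.pair p.1 p.2)

lemma pair_mem_Tset {t n m : ℕ} (hn : n < t) (hm : m < t) : Nat.pair n m ∈ Tset t :=
  Finset.mem_image.2 ⟨(n, m), by simp [Finset.mem_product, hn, hm], rfl⟩

lemma Tset_mono {t t' : ℕ} (h : t ≤ t') : Tset t ⊆ Tset t' := by
  intro i hi
  simp only [Tset, Finset.mem_image, Finset.mem_product, Finset.mem_range] at *
  obtain ⟨p, ⟨h1, h2⟩, rfl⟩ := hi
  exact ⟨p, ⟨h1.trans_le h, h2.trans_le h⟩, rfl⟩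

lemma Sfin_congr {t : ℕ} {x y : Baire} (h : ∀ i ∈ Tset t, y i = x i) :
    Sfin t y = Sfin t x := by
  unfold Sfin
  apply Finset.filter_congr
  intro n hn
  rw [Finset.mem_range] at hn
  constructor <;> rintro ⟨m, hm, hne⟩ <;> refine ⟨m, hm, ?_⟩
  · rw [← h (Nat.pair n m) (pair_mem_Tset hn (Finset.mem_range.1 hm))]; exact hne
  · rw [h (Nat.pair n m) (pair_mem_Tset hn (Finset.mem_range.1 hm))]; exact hne

lemma Sfin_subset_toFinset {x : Baire}
    (hfin : {n | component x n ≠ fun _ => 0}.Finite) (t : ℕ) :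
    Sfin t x ⊆ hfin.toFinset := fun n hn =>
  hfin.mem_toFinset.2 (component_ne_of_mem_Sfin hn)

lemma exists_Sfin_eq {x : Baire}
    (hfin : {n | component x n ≠ fun _ => 0}.Finite) :
    ∃ t, Sfin t x = hfin.toFinset := by
  classical
  set NSet := hfin.toFinset with hNS
  have hm : ∀ n ∈ NSet, ∃ m, x (Nat.pair n m) ≠ 0 := by
    intro n hn
    have h1 : component x n ≠ fun _ => 0 := hfin.mem_toFinset.1 hn
    rcases Function.ne_iff.1 h1 with ⟨m, hm⟩
    exact ⟨m, hm⟩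
  set mfun : ℕ → ℕ := fun n => if h : ∃ m, x (Nat.pair n m) ≠ 0 then Nat.find h else 0
    with hmfun
  set t := (NSet.sup fun n => max n (mfun n)) + 1 with ht
  refine ⟨t, subset_antisymm (Sfin_subset_toFinset hfin t) ?_⟩
  intro n hn
  have h1 : ∃ m, x (Nat.pair n m) ≠ 0 := hm n hn
  have hsup : max n (mfun n) ≤ NSet.sup fun n => max n (mfun n) := Finset.le_sup (f := fun n => max n (mfun n)) hn
  have hnt : n < t := by
    have := (le_max_left n (mfun n)).trans hsup
    omega
  have hmt : mfun n < t := by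
    have := (le_max_right n (mfun n)).trans hsup
    omega
  simp only [Sfin, Finset.mem_filter, Finset.mem_range]
  refine ⟨hnt, mfun n, hmt, ?_⟩
  simp only [hmfun, dif_pos h1]
  exact Nat.find_spec h1

/-- The inner reduction map. -/
def Gmap : Baire → Baire := fun x t => (Sfin t x).card

lemma sSup_range_Gmap {x : Baire}
    (hfin : {n | component x n ≠ fun _ => 0}.Finite) :
    sSup (Set.range (Gmap x)) = hfin.toFinset.card := by
  obtain ⟨t₀, ht₀⟩ := exists_Sfin_eq hfin
  have hbd : ∀ a ∈ Set.range (Gmap x), a ≤ hfin.toFinset.card := by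
    rintro a ⟨t, rfl⟩
    exact Finset.card_le_card (Sfin_subset_toFinset hfin t)
  apply le_antisymm
  · exact csSup_le ⟨Gmap x 0, Set.mem_range_self 0⟩ hbd
  · exact le_csSup ⟨_, hbd⟩ ⟨t₀, by simp [Gmap, ht₀]⟩

open Classical in
/-- The outer reduction map. -/
noncomputable def Fmap : Baire × Baire → Baire := fun p k =>
  if (Nat.unpair k).2 = 0 then
    if h : ∃ t, (Sfin t p.1).card = p.2 0 then
      (if (Nat.unpair k).1 ∈ Sfin (Nat.find h) p.1 then 1 else 0)
    else 0
  else 0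

lemma isOpen_agree (x : Baire) (T : Finset ℕ) :
    IsOpen {y : Baire | ∀ i ∈ T, y i = x i} := by
  have h : {y : Baire | ∀ i ∈ T, y i = x i} = Set.pi ↑T (fun i => ({x i} : Set ℕ)) := by
    ext y; simp [Set.mem_pi]
  rw [h]
  exact isOpen_set_pi T.finite_toSet (fun i _ => isOpen_discrete _)

lemma continuous_Gmap : Continuous Gmap := by
  apply continuous_pi
  intro t
  apply IsLocallyConstant.continuous (f := fun x => (Sfin t x).card)
  rw [IsLocallyConstant.iff_exists_open]
  intro x
  exact ⟨{y | ∀ i ∈ Tset t, y i = x i}, isOpen_agree x (Tset t), fun i _ => rfl,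
    fun y hy => by rw [Sfin_congr hy]⟩

lemma Fmap_eq {x : Baire} {N : ℕ} (hex : ∃ t, (Sfin t x).card = N)
    {x' y' : Baire} (hx' : ∀ i ∈ Tset (Nat.find hex), x' i = x i) (hy' : y' 0 = N) :
    Fmap (x', y') = fun k =>
      if (Nat.unpair k).2 = 0 then
        (if (Nat.unpair k).1 ∈ Sfin (Nat.find hex) x then 1 else 0)
      else 0 := by
  funext k
  have hagree : ∀ t ≤ Nat.find hex, Sfin t x' = Sfin t x := fun t ht =>
    Sfin_congr (fun i hi => hx' i (Tset_mono ht hi))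
  have hex' : ∃ t, (Sfin t x').card = y' 0 :=
    ⟨Nat.find hex, by rw [hagree _ le_rfl, hy']; exact Nat.find_spec hex⟩
  have hle : Nat.find hex' ≤ Nat.find hex :=
    Nat.find_le (by rw [hagree _ le_rfl, hy']; exact Nat.find_spec hex)
  have hfe : Nat.find hex' = Nat.find hex := by
    refine le_antisymm hle (Nat.find_le ?_)
    rw [← hagree _ hle, Nat.find_spec hex', hy']
  simp only [Fmap]
  by_cases hm : (Nat.unpair k).2 = 0
  · rw [if_pos hm, if_pos hm, dif_pos hex', hfe, hagree _ le_rfl]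
  · rw [if_neg hm, if_neg hm]

theorem finPar_lpo_le_max :
    WLE (parMap LPO) (finParDom Set.univ) MAXfun MAXdom := by
  refine ⟨Gmap, Fmap, continuous_Gmap.continuousOn, ?_, ?_, ?_⟩
  · -- MapsTo
    intro x hx
    exact ⟨hx.2.toFinset.card, fun t => Finset.card_le_card (Sfin_subset_toFinset hx.2 t)⟩
  · -- ContinuousOn Fmap
    rintro p ⟨x, hx, rfl⟩
    have hfin := hx.2
    set N := hfin.toFinset.card with hNdef
    obtain ⟨t₁, ht₁⟩ := exists_Sfin_eq hfin
    have hex : ∃ t, (Sfin t x).card = N := ⟨t₁, by rw [ht₁]⟩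
    have hN : MAXfun (Gmap x) 0 = N := by
      simp only [MAXfun, if_pos rfl]
      exact sSup_range_Gmap hfin
    set C : Baire := fun k =>
      if (Nat.unpair k).2 = 0 then
        (if (Nat.unpair k).1 ∈ Sfin (Nat.find hex) x then 1 else 0)
      else 0 with hC
    set U : Set (Baire × Baire) :=
      {x' | ∀ i ∈ Tset (Nat.find hex), x' i = x i} ×ˢ {y' | y' 0 = N} with hU
    have hUopen : IsOpen U := by
      apply (isOpen_agree x (Tset (Nat.find hex))).prod
      have h2 : {y' : Baire | y' 0 = N} = (fun y : Baire => y 0) ⁻¹' {N} := rfl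
      rw [h2]
      exact (continuous_apply 0).isOpen_preimage _ (isOpen_discrete _)
    have hpU : (x, MAXfun (Gmap x)) ∈ U := ⟨fun i _ => rfl, hN⟩
    have key : ∀ q ∈ U, Fmap q = C := by
      rintro ⟨x', y'⟩ ⟨h1, h2⟩
      exact Fmap_eq hex h1 h2
    have ev : Fmap =ᶠ[nhds (x, MAXfun (Gmap x))] (fun _ => C) :=
      Filter.eventuallyEq_of_mem (hUopen.mem_nhds hpU) key
    exact ((continuousAt_congr ev).2 continuousAt_const).continuousWithinAt
  · -- correctness
    intro x hx
    have hfin := hx.2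
    set N := hfin.toFinset.card with hNdef
    obtain ⟨t₁, ht₁⟩ := exists_Sfin_eq hfin
    have hN : MAXfun (Gmap x) 0 = N := by
      simp only [MAXfun, if_pos rfl]
      exact sSup_range_Gmap hfin
    have hex : ∃ t, (Sfin t x).card = N := ⟨t₁, by rw [ht₁]⟩
    have hF : Fmap (x, MAXfun (Gmap x)) = fun k =>
        if (Nat.unpair k).2 = 0 then
          (if (Nat.unpair k).1 ∈ Sfin (Nat.find hex) x then 1 else 0)
        else 0 :=
      Fmap_eq hex (fun i _ => rfl) hN
    have hfind : Sfin (Nat.find hex) x = hfin.toFinset :=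
      Finset.eq_of_subset_of_card_le (Sfin_subset_toFinset hfin _)
        (Nat.find_spec hex).ge
    funext k
    rw [hF]
    simp only [parMap, LPO, hfind]
    by_cases hm : (Nat.unpair k).2 = 0
    · rw [if_pos hm]
      by_cases hc : component x (Nat.unpair k).1 = fun _ => 0
      · rw [if_pos hc, if_neg (by simpa [Set.Finite.mem_toFinset] using not_not.2 hc)]
      · rw [if_neg hc, if_pos (hfin.mem_toFinset.2 hc), if_pos hm]
    · rw [if_neg hm]
      by_cases hc : component x (Nat.unpair k).1 = fun _ => 0
      · rw [if_pos hc]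
      · rw [if_neg hc, if_neg hm]
end
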